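/- (Block evolution for η = 0, Phase I) Let n be odd, ℓ ≥ 2 and 2ℓ < n. For every t with 0 ≤ t ≤ ℓ−1, the t-th iterate Ψ₀^[t](B(n,ℓ)) of the deterministic traffic-majority map with η = 0 is the configuration whose cells in state 1 are exactly those x ∈ ZMod n such that x.val ≤ ℓ−1−t, or x.val = ℓ−1−t+2k for some k with 1 ≤ k ≤ t. (In the boundary notation: B₀ = 0, B₁ = ℓ−1−t and B₂ = ℓ−1+t at time t.) -/
import Mathlib


/-- A configuration of the ring of `n` cells, each in a state from `Fin 2`. -/
abbrev Config (n : ℕ) := ZMod n → Fin 2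

/-- The 1-block of length `ℓ`. -/
def block (n ℓ : ℕ) : Config n := fun x => if x.val < ℓ then 1 else 0

/-- The constant configuration with all cells in state `σ`. -/
def endSt (n : ℕ) (σ : Fin 2) : Config n := fun _ => σ

/-- The deterministic global map `Ψ₀` of the traffic-majority rule with `η = 0`
(the traffic rule ECA 184): `φ₀(0,0,0)=0, φ₀(0,0,1)=0, φ₀(1,0,0)=1,
φ₀(1,0,1)=1, φ₀(1,1,1)=1, φ₀(0,1,1)=1, φ₀(1,1,0)=0, φ₀(0,1,0)=0`. -/
def psi0 (n : ℕ) (c : Config n) : Config n := fun x =>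
  if c x = 0 then c (x - 1) else c (x + 1)

/-- Block evolution for `η = 0`, Phase I: for `n` odd, `ℓ ≥ 2`,
`2ℓ < n` and `0 ≤ t ≤ ℓ - 1`, the cells of `Ψ₀^[t](B(n,ℓ))` in state 1 are
exactly those `x` with `x.val ≤ ℓ - 1 - t`, or `x.val = ℓ - 1 - t + 2k` for
some `1 ≤ k ≤ t`. -/
theorem block_eta_zero_phaseI (n : ℕ) (hn : Odd n) (ℓ : ℕ) (h2 : 2 ≤ ℓ)
    (hℓ : 2 * ℓ < n) (t : ℕ) (ht : t ≤ ℓ - 1) (x : ZMod n) :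
    (psi0 n)^[t] (block n ℓ) x = 1 ↔
      (x.val ≤ ℓ - 1 - t ∨ ∃ k, 1 ≤ k ∧ k ≤ t ∧ x.val = ℓ - 1 - t + 2 * k) := by
  classical
  have hn5 : 5 ≤ n := by rcases hn with ⟨j, hj⟩; omega
  haveI : NeZero n := ⟨by omega⟩
  have hcast : ∀ y : ZMod n, ((y.val : ℕ) : ZMod n) = y := by
    intro y
    rw [ZMod.natCast_val, ZMod.cast_id]
  have key : ∀ t, t ≤ ℓ - 1 → ∀ x : ZMod n,
      (psi0 n)^[t] (block n ℓ) x =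
        if (x.val ≤ ℓ - 1 - t ∨ ∃ k, 1 ≤ k ∧ k ≤ t ∧ x.val = ℓ - 1 - t + 2 * k)
          then 1 else 0 := by
    intro t
    induction t with
    | zero =>
      intro _ x
      simp only [Function.iterate_zero, id_eq, block]
      refine if_congr ?_ rfl rfl
      constructor
      · intro h; left; omega
      · rintro (h | ⟨k, hk1, hk0, _⟩) <;> omega
    | succ t ih =>
      intro ht1 x
      have hih := ih (by omega)
      rw [Function.iterate_succ_apply']
      show (if (psi0 n)^[t] (block n ℓ) x = 0
          then (psi0 n)^[t] (block n ℓ) (x - 1)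
          else (psi0 n)^[t] (block n ℓ) (x + 1)) = _
      set a := ℓ - 1 - t with ha_def
      have ha : 1 ≤ a := by omega
      have ha2 : ℓ - 1 - (t + 1) = a - 1 := by omega
      have hxval : x.val < n := x.val_lt
      by_cases h : (x.val ≤ a ∨ ∃ k, 1 ≤ k ∧ k ≤ t ∧ x.val = a + 2 * k)
      · -- current value is 1, copy from the right
        have hcx : (psi0 n)^[t] (block n ℓ) x = 1 := by rw [hih x, if_pos h]
        rw [hcx, if_neg (by decide : (1 : Fin 2) ≠ 0)]
        have hvb : x.val ≤ a + 2 * t := by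
          rcases h with h | ⟨k, hk1, hkt, hk⟩ <;> omega
        have hlt : x.val + 1 < n := by omega
        have hx1 : (x + 1).val = x.val + 1 := by
          have : x + 1 = ((x.val + 1 : ℕ) : ZMod n) := by
            rw [Nat.cast_add, Nat.cast_one, hcast]
          rw [this, ZMod.val_cast_of_lt hlt]
        rw [hih (x + 1), hx1, ha2]
        refine if_congr ?_ rfl rfl
        constructor
        · rintro (h' | ⟨k, hk1, hkt, hk⟩)
          · left; omega
          · rcases h with h | ⟨k', hk1', hkt', hk'⟩ <;> omega
        · rintro (h' | ⟨k, hk1, hkt, hk⟩)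
          · left; omega
          · rcases h with h | ⟨k', hk1', hkt', hk'⟩ <;> omega
      · -- current value is 0, copy from the left
        have hcx : (psi0 n)^[t] (block n ℓ) x = 0 := by rw [hih x, if_neg h]
        rw [hcx, if_pos rfl]
        push_neg at h
        obtain ⟨hgt, hne⟩ := h
        have hv1 : 1 ≤ x.val := by omega
        have hx1 : (x - 1).val = x.val - 1 := by
          have h' : ((x.val - 1 : ℕ) : ZMod n) = x - 1 := by
            have h'' : ((x.val - 1 + 1 : ℕ) : ZMod n) = x := by
              rw [show x.val - 1 + 1 = x.val from by omega, hcast]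
            rw [Nat.cast_add, Nat.cast_one] at h''
            linear_combination h''
          rw [← h', ZMod.val_cast_of_lt (by omega)]
        rw [hih (x - 1), hx1, ha2]
        refine if_congr ?_ rfl rfl
        constructor
        · rintro (h' | ⟨k, hk1, hkt, hk⟩)
          · right; exact ⟨1, le_refl 1, by omega, by omega⟩
          · right; exact ⟨k + 1, by omega, by omega, by omega⟩
        · rintro (h' | ⟨k, hk1, hkt, hk⟩)
          · omega
          · rcases Nat.lt_or_ge k 2 with hk2 | hk2
            · left; omega
            · right; exact ⟨k - 1, by omega, by omega, by omega⟩
  rw [key t ht x]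
  split <;> rename_i h
  · simpa using h
  · simp only [show (0 : Fin 2) ≠ 1 from by decide, false_iff]
    exact h
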